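/- arXiv:2204.11727 — 5 statements merged into one kernel-verified Lean document; each statement's English description precedes it below -/
import Mathlib

section
/- The Haagerup set is invariant under equivalence of matrices: if H₁ = D₁ P₁ H₂ P₂ D₂ for diagonal unitary matrices D₁, D₂ and permutation matrices P₁, P₂ (all of order N), then Λ(H₁) = Λ(H₂). -/
/-!
Multiplying by permutation matrices only relabels rows and columns, so it permutes the index
quadruples `(j, k, l, m)` and leaves the set of Haagerup products unchanged. A diagonal unitary
factor multiplies row `j` by a phase `d j`; in the product `H j k * H l m * conj (H j m) * conj (H l k)`
each of the phases of rows `j, l` and columns `k, m` appears once plainly and once conjugated,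
so they cancel because `d i * conj (d i) = 1`.
-/

open Matrix

/-- The Haagerup set `Λ(H) = { H_{jk}·H_{lm}·conj(H_{jm})·conj(H_{lk}) }`. -/
def HaagerupSet {N : ℕ} (H : Matrix (Fin N) (Fin N) ℂ) : Set ℂ :=
  {z | ∃ j k l m : Fin N,
    z = H j k * H l m * (starRingEnd ℂ) (H j m) * (starRingEnd ℂ) (H l k)}

/-- `P` is a permutation matrix. -/
def IsPermMatrix {N : ℕ} (P : Matrix (Fin N) (Fin N) ℂ) : Prop :=
  ∃ σ : Equiv.Perm (Fin N), ∀ i j, P i j = if σ i = j then 1 else 0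

/-- `D` is a diagonal unitary matrix. -/
def IsDiagUnitary {N : ℕ} (D : Matrix (Fin N) (Fin N) ℂ) : Prop :=
  D.IsDiag ∧ D * Dᴴ = 1

lemma IsPermMatrix.exists_eq_permMatrix {N : ℕ} {P : Matrix (Fin N) (Fin N) ℂ}
    (hP : IsPermMatrix P) : ∃ σ : Equiv.Perm (Fin N), P = σ.permMatrix ℂ := by
  obtain ⟨σ, hσ⟩ := hP
  refine ⟨σ, Matrix.ext fun i j => ?_⟩
  simp [hσ, PEquiv.toMatrix_apply]

lemma IsDiagUnitary.exists_eq_diagonal {N : ℕ} {D : Matrix (Fin N) (Fin N) ℂ}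
    (hD : IsDiagUnitary D) :
    ∃ d : Fin N → ℂ, (∀ i, d i * starRingEnd ℂ (d i) = 1) ∧ D = diagonal d := by
  obtain ⟨hdiag, hunit⟩ := hD
  refine ⟨D.diag, fun i => ?_, hdiag.diagonal_diag.symm⟩
  rw [← hdiag.diagonal_diag, diagonal_conjTranspose, diagonal_mul_diagonal] at hunit
  simpa using congrFun (congrArg Matrix.diag hunit) i

lemma haagerupSet_submatrix {N : ℕ} (H : Matrix (Fin N) (Fin N) ℂ) {f g : Fin N → Fin N}
    (hf : f.Surjective) (hg : g.Surjective) : HaagerupSet (H.submatrix f g) = HaagerupSet H := by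
  ext z
  constructor
  · rintro ⟨j, k, l, m, rfl⟩
    exact ⟨f j, g k, f l, g m, rfl⟩
  · rintro ⟨j, k, l, m, rfl⟩
    obtain ⟨j, rfl⟩ := hf j
    obtain ⟨k, rfl⟩ := hg k
    obtain ⟨l, rfl⟩ := hf l
    obtain ⟨m, rfl⟩ := hg m
    exact ⟨j, k, l, m, rfl⟩

lemma haagerupSet_diagonal_mul_mul_diagonal {N : ℕ} (H : Matrix (Fin N) (Fin N) ℂ)
    {d₁ d₂ : Fin N → ℂ} (hd₁ : ∀ i, d₁ i * starRingEnd ℂ (d₁ i) = 1)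
    (hd₂ : ∀ i, d₂ i * starRingEnd ℂ (d₂ i) = 1) :
    HaagerupSet (diagonal d₁ * H * diagonal d₂) = HaagerupSet H := by
  have phases_cancel : ∀ j k l m : Fin N,
      d₁ j * H j k * d₂ k * (d₁ l * H l m * d₂ m)
        * starRingEnd ℂ (d₁ j * H j m * d₂ m) * starRingEnd ℂ (d₁ l * H l k * d₂ k)
        = H j k * H l m * starRingEnd ℂ (H j m) * starRingEnd ℂ (H l k) := by
    intro j k l m
    calc _ = d₁ j * starRingEnd ℂ (d₁ j) * (d₁ l * starRingEnd ℂ (d₁ l))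
          * (d₂ k * starRingEnd ℂ (d₂ k)) * (d₂ m * starRingEnd ℂ (d₂ m))
          * (H j k * H l m * starRingEnd ℂ (H j m) * starRingEnd ℂ (H l k)) := by
            simp only [map_mul]; ring
      _ = _ := by rw [hd₁ j, hd₁ l, hd₂ k, hd₂ m]; ring
  simp only [HaagerupSet, diagonal_mul, mul_diagonal, phases_cancel]

/-- The Haagerup set is invariant under equivalence of matrices:
if `H₁ = D₁ P₁ H₂ P₂ D₂` for diagonal unitary `D₁, D₂` and permutation matrices `P₁, P₂`,
then `Λ(H₁) = Λ(H₂)`. -/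
theorem haagerupSet_invariant {N : ℕ} (H₁ H₂ D₁ D₂ P₁ P₂ : Matrix (Fin N) (Fin N) ℂ)
    (hD₁ : IsDiagUnitary D₁) (hD₂ : IsDiagUnitary D₂)
    (hP₁ : IsPermMatrix P₁) (hP₂ : IsPermMatrix P₂)
    (h : H₁ = D₁ * P₁ * H₂ * P₂ * D₂) :
    HaagerupSet H₁ = HaagerupSet H₂ := by
  obtain ⟨d₁, hd₁, rfl⟩ := hD₁.exists_eq_diagonal
  obtain ⟨d₂, hd₂, rfl⟩ := hD₂.exists_eq_diagonal
  obtain ⟨σ₁, rfl⟩ := hP₁.exists_eq_permMatrix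
  obtain ⟨σ₂, rfl⟩ := hP₂.exists_eq_permMatrix
  rw [h, mul_assoc _ (σ₁.permMatrix ℂ), mul_assoc _ (σ₁.permMatrix ℂ * H₂),
    PEquiv.toMatrix_toPEquiv_mul, PEquiv.mul_toMatrix_toPEquiv,
    haagerupSet_diagonal_mul_mul_diagonal _ hd₁ hd₂]
  exact haagerupSet_submatrix H₂ σ₁.surjective σ₂.symm.surjective
end

section
/- Let a, b, c, d be complex numbers of modulus 1 and write x̄ = conj(x) = 1/x. Then the 9×9 matrix Y9C(a,b,c,d) is a complex Hadamard matrix if and only if the following five equations hold (where c.c. denotes the complex conjugate of all preceding terms): a+b+c+d+c.c. = −1; a²+b²+c²+d²+c.c. = −1; a/b+b/d+c/d+ac+c.c. = −1; a/d+b/c+bc+ad+c.c. = −1; a/c+ab+cd+bd+c.c. = −1. -/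
open Matrix Complex

/-- `H` is a complex Hadamard matrix of order `N`: every entry has modulus one and
`H·Hᴴ = N·I`. -/
def IsCHM {N : ℕ} (H : Matrix (Fin N) (Fin N) ℂ) : Prop :=
  (∀ j k, ‖H j k‖ = 1) ∧
  H * Hᴴ = (N : ℂ) • (1 : Matrix (Fin N) (Fin N) ℂ)

/-- The matrix `Y9C(a,b,c,d)` from the paper, with `x̄ = conj x`. -/
noncomputable def Y9C (a b c d : ℂ) : Matrix (Fin 9) (Fin 9) ℂ :=
  let s := starRingEnd ℂ
  !![1,   1,   1,   1,   1,   1,   1,   1,   1;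
     1,   a,   d, s a, s c, s b,   c,   b, s d;
     1,   b,   c, s b,   a, s d, s a,   d, s c;
     1,   c, s b, s c,   d,   a, s d, s a,   b;
     1, s b, s c,   b, s a,   d,   a, s d,   c;
     1,   d, s a, s d,   b, s c, s b,   c,   a;
     1, s a, s d,   a,   c,   b, s c, s b,   d;
     1, s c,   b,   c, s d, s a,   d,   a, s b;
     1, s d,   a,   d, s b,   c,   b, s c, s a]

/-!
Every entry of `Y9C` is unimodular, so the diagonal of `H·Hᴴ` is automatically `9`. Writing
`x̄ = x⁻¹`, each off-diagonal entry of `H·Hᴴ` is `p + p̄ + 1` for one of the five sums `p` of the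
unitarity equations, and each of the five sums occurs; hence `H·Hᴴ = 9·I` exactly when all five
equations hold.
-/

theorem mul_conjTranspose_apply_self_of_norm_eq_one {N : ℕ} {H : Matrix (Fin N) (Fin N) ℂ}
    (hH : ∀ j k, ‖H j k‖ = 1) (j : Fin N) : (H * Hᴴ) j j = N := by
  simp [mul_apply, mul_conj', hH]

theorem isCHM_iff_of_norm_eq_one {N : ℕ} {H : Matrix (Fin N) (Fin N) ℂ}
    (hH : ∀ j k, ‖H j k‖ = 1) : IsCHM H ↔ ∀ j k, j ≠ k → (H * Hᴴ) j k = 0 := by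
  refine ⟨fun ⟨_, hU⟩ j k hjk => by simp [hU, hjk], fun hoff => ⟨hH, ?_⟩⟩
  ext j k
  obtain rfl | hjk := eq_or_ne j k
  · simp [mul_conjTranspose_apply_self_of_norm_eq_one hH]
  · simp [hoff j k hjk, hjk]

theorem forall_ne_comp_iff {ι κ : Type*} {σ : ι → ι → κ} (hσ : ∀ i, ∃ j k, j ≠ k ∧ σ j k = i)
    {P : κ → Prop} : (∀ j k, j ≠ k → P (σ j k)) ↔ ∀ i, P i := by
  refine ⟨fun h i => ?_, fun h j k _ => h _⟩
  obtain ⟨j, k, hjk, rfl⟩ := hσ i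
  exact h j k hjk

namespace Y9C

noncomputable def unitarityTerm (a b c d : ℂ) : Fin 5 → ℂ :=
  ![a + b + c + d, a^2 + b^2 + c^2 + d^2, a/b + b/d + c/d + a*c, a/d + b/c + b*c + a*d,
    a/c + a*b + c*d + b*d]

/-- For `j ≠ k`, the index of the unitarity equation expressing that rows `j` and `k` of `Y9C`
are orthogonal; the diagonal values are arbitrary. -/
def rowPairing : Fin 9 → Fin 9 → Fin 5 :=
  ![![0, 0, 0, 0, 0, 0, 0, 0, 0],
    ![0, 0, 2, 4, 4, 3, 1, 2, 3],
    ![0, 2, 0, 3, 1, 2, 4, 3, 4],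
    ![0, 4, 3, 0, 3, 2, 2, 1, 4],
    ![0, 4, 1, 3, 0, 4, 2, 3, 2],
    ![0, 3, 2, 2, 4, 0, 3, 4, 1],
    ![0, 1, 4, 2, 2, 3, 0, 4, 3],
    ![0, 2, 3, 1, 3, 4, 4, 0, 2],
    ![0, 3, 4, 4, 2, 1, 3, 2, 0]]

theorem rowPairing_surjective_off_diag (i : Fin 5) : ∃ j k, j ≠ k ∧ rowPairing j k = i := by
  fin_cases i
  exacts [⟨0, 1, by decide, rfl⟩, ⟨1, 6, by decide, rfl⟩, ⟨1, 2, by decide, rfl⟩,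
    ⟨1, 5, by decide, rfl⟩, ⟨1, 3, by decide, rfl⟩]

variable {a b c d : ℂ} (ha : ‖a‖ = 1) (hb : ‖b‖ = 1) (hc : ‖c‖ = 1) (hd : ‖d‖ = 1)
include ha hb hc hd

theorem norm_apply (j k : Fin 9) : ‖Y9C a b c d j k‖ = 1 := by
  fin_cases j <;> fin_cases k <;> simp [Y9C, ha, hb, hc, hd]

set_option maxHeartbeats 1000000 in
theorem mul_conjTranspose_apply_of_ne {j k : Fin 9} (hjk : j ≠ k) :
    (Y9C a b c d * (Y9C a b c d)ᴴ) j k =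
      unitarityTerm a b c d (rowPairing j k) +
        starRingEnd ℂ (unitarityTerm a b c d (rowPairing j k)) + 1 := by
  have hconj : ∀ {z : ℂ}, ‖z‖ = 1 → starRingEnd ℂ z = z⁻¹ := fun hz => (inv_eq_conj hz).symm
  fin_cases j <;> fin_cases k <;> (try exact absurd rfl hjk) <;>
    simp [Y9C, unitarityTerm, rowPairing, mul_apply, Fin.sum_univ_succ,
      hconj ha, hconj hb, hconj hc, hconj hd] <;> ring

end Y9C

/-- For unimodular `a, b, c, d`, the matrix `Y9C(a,b,c,d)` is a complex Hadamard matrix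
if and only if the five unitarity equations hold. -/
theorem Y9C_isCHM_iff (a b c d : ℂ)
    (ha : ‖a‖ = 1) (hb : ‖b‖ = 1)
    (hc : ‖c‖ = 1) (hd : ‖d‖ = 1) :
    IsCHM (Y9C a b c d) ↔
      (a + b + c + d + (starRingEnd ℂ) (a + b + c + d) = -1 ∧
       a^2 + b^2 + c^2 + d^2 + (starRingEnd ℂ) (a^2 + b^2 + c^2 + d^2) = -1 ∧
       a/b + b/d + c/d + a*c + (starRingEnd ℂ) (a/b + b/d + c/d + a*c) = -1 ∧
       a/d + b/c + b*c + a*d + (starRingEnd ℂ) (a/d + b/c + b*c + a*d) = -1 ∧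
       a/c + a*b + c*d + b*d + (starRingEnd ℂ) (a/c + a*b + c*d + b*d) = -1) := by
  set F := Y9C.unitarityTerm a b c d
  have hpairing := forall_ne_comp_iff (P := fun i => F i + starRingEnd ℂ (F i) = -1)
    Y9C.rowPairing_surjective_off_diag
  rw [isCHM_iff_of_norm_eq_one (Y9C.norm_apply ha hb hc hd)]
  refine (forall₂_congr fun j k => forall_congr' fun hjk => ?_).trans (hpairing.trans ?_)
  · rw [Y9C.mul_conjTranspose_apply_of_ne ha hb hc hd hjk, add_eq_zero_iff_eq_neg]
  · simp [Fin.forall_fin_succ, F, Y9C.unitarityTerm]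
end

section
/- Let a, b, c be complex numbers of modulus 1 and let V8(a,b,c) be the 8×8 matrix with rows: (−1,−1,b,b,c,c,a,a); (−1,b,−1,c,b,a,c,−a); (b,−1,c,−1,a,b,−a,c); (b,c,−1,a,−1,−a,b,−c); (c,b,a,−1,−a,−1,−c,b); (c,a,b,−a,−1,−c,−1,−b); (a,c,−a,b,−c,−1,−b,−1); (a,−a,c,−c,b,−b,−1,1). Then V8(a,b,c) is a complex Hadamard matrix (i.e. V8·V8ᴴ = 8·I) if and only if the following three equations hold: −1/b − b + b/c + c/b + c/a + a/c = 0; −1/b − b − 1/c − c − c/a − a/c + b/a + a/b = 0; 1/c + c + 1/a + a + b/a + a/b = 0. -/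
open Matrix Complex

/-- Elser's matrix `V8(a,b,c)` in its undephased form. -/
def V8 (a b c : ℂ) : Matrix (Fin 8) (Fin 8) ℂ :=
  !![-1, -1,  b,  b,  c,  c,  a,  a;
     -1,  b, -1,  c,  b,  a,  c, -a;
      b, -1,  c, -1,  a,  b, -a,  c;
      b,  c, -1,  a, -1, -a,  b, -c;
      c,  b,  a, -1, -a, -1, -c,  b;
      c,  a,  b, -a, -1, -c, -1, -b;
      a,  c, -a,  b, -c, -1, -b, -1;
      a, -a,  c, -c,  b, -b, -1,  1]

/-!
`V8(a,b,c)` is symmetric, so for unimodular parameters its conjugate transpose is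
`V8(a⁻¹,b⁻¹,c⁻¹)`. The product `V8(a,b,c) · V8(a⁻¹,b⁻¹,c⁻¹)` has `8` on the diagonal, and every
off-diagonal entry is `0` or `±` one of the three Laurent polynomials of the statement, each of
which occurs. Hence `V8` is Hadamard exactly when the three of them vanish.
-/

open ComplexConjugate

theorem V8_transpose (a b c : ℂ) : (V8 a b c)ᵀ = V8 a b c := by
  ext i j
  fin_cases i <;> fin_cases j <;> rfl

theorem V8_map_star (a b c : ℂ) : (V8 a b c).map star = V8 (star a) (star b) (star c) := by
  ext i j
  fin_cases i <;> fin_cases j <;> simp [V8]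

theorem V8_conjTranspose (a b c : ℂ) : (V8 a b c)ᴴ = V8 (conj a) (conj b) (conj c) := by
  rw [conjTranspose, V8_transpose, V8_map_star]
  rfl

theorem norm_V8_apply {a b c : ℂ} (ha : ‖a‖ = 1) (hb : ‖b‖ = 1) (hc : ‖c‖ = 1) (j k : Fin 8) :
    ‖V8 a b c j k‖ = 1 := by
  fin_cases j <;> fin_cases k <;> simp [V8, ha, hb, hc]

def V8Gram (x y z : ℂ) : Matrix (Fin 8) (Fin 8) ℂ :=
  !![ 8,  x,  x,  y,  y, -z, -z,  0;
      x,  8,  y,  x, -z,  y,  0, -z;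
      x,  y,  8, -z,  x,  0,  y,  z;
      y,  x, -z,  8,  0,  x,  z,  y;
      y, -z,  x,  0,  8,  z,  x, -y;
     -z,  y,  0,  x,  z,  8, -y,  x;
     -z,  0,  y,  z,  x, -y,  8, -x;
      0, -z,  z,  y, -y,  x, -x,  8]

set_option maxHeartbeats 400000 in
theorem V8_mul_V8_inv {a b c : ℂ} (ha : a ≠ 0) (hb : b ≠ 0) (hc : c ≠ 0) :
    V8 a b c * V8 a⁻¹ b⁻¹ c⁻¹ =
      V8Gram (-1/b - b + b/c + c/b + c/a + a/c)
        (-1/b - b - 1/c - c - c/a - a/c + b/a + a/b)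
        (1/c + c + 1/a + a + b/a + a/b) := by
  ext i j
  fin_cases i <;> fin_cases j <;>
    simp [mul_apply, Fin.sum_univ_eight, V8, V8Gram, div_eq_mul_inv, ha, hb, hc] <;> ring

theorem V8Gram_eq_smul_one_iff {x y z : ℂ} :
    V8Gram x y z = (8 : ℂ) • 1 ↔ x = 0 ∧ y = 0 ∧ z = 0 := by
  constructor
  · intro h
    refine ⟨?_, ?_, ?_⟩
    · simpa [V8Gram] using congrFun₂ h 0 1
    · simpa [V8Gram] using congrFun₂ h 0 3
    · simpa [V8Gram] using congrFun₂ h 0 5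
  · rintro ⟨rfl, rfl, rfl⟩
    ext i j
    fin_cases i <;> fin_cases j <;> simp [V8Gram]

/-- For unimodular `a, b, c`, the matrix `V8(a,b,c)` is a complex Hadamard matrix of order 8
if and only if the three unitarity equations hold. -/
theorem V8_isCHM_iff (a b c : ℂ)
    (ha : ‖a‖ = 1) (hb : ‖b‖ = 1) (hc : ‖c‖ = 1) :
    IsCHM (V8 a b c) ↔
      (-1/b - b + b/c + c/b + c/a + a/c = 0 ∧
       -1/b - b - 1/c - c - c/a - a/c + b/a + a/b = 0 ∧
       1/c + c + 1/a + a + b/a + a/b = 0) := by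
  have hne {z : ℂ} (hz : ‖z‖ = 1) : z ≠ 0 := by
    rintro rfl
    simp at hz
  rw [IsCHM, and_iff_right (norm_V8_apply ha hb hc), V8_conjTranspose, ← inv_eq_conj ha,
    ← inv_eq_conj hb, ← inv_eq_conj hc, V8_mul_V8_inv (hne ha) (hne hb) (hne hc), Nat.cast_ofNat,
    V8Gram_eq_smul_one_iff]
end

section
/- The octic polynomial q(x) = x⁸ + 16x⁷ + 56x⁶ − 96x⁵ − 696x⁴ − 896x³ − 96x² + 256x − 16 factors as the product q(x) = (x⁴ + 8x³ + α₀x² + β₀x + γ₀)·(x⁴ + 8x³ + α₁x² + β₁x + γ₁), where for μ ∈ {0,1}: α_μ = −4 + 2(−1)^μ·√(116 − 2√2), β_μ = −16 + 8(−1)^μ·√(10 − √2), and γ_μ = −4√2 + 4 − 4(−1)^μ·√(4 − 2√2), the square roots being the nonnegative real square roots. -/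
/-!
With `a = √(116 - 2√2)`, `b = √(10 - √2)` and `c = √(4 - 2√2)`, the factorization is the
difference of squares `q = P² - R²` for `P = x⁴ + 8x³ - 4x² - 16x + 4 - 4√2` and
`R = 2a x² + 8b x - 4c`. Expanding `R²` only involves `a², b², c²` and the products
`ab, ac, bc`, all of which lie in `ℚ(√2)` because
`(116 - 2√2)(10 - √2) = (34 - 2√2)²`, `(116 - 2√2)(4 - 2√2) = (20 - 6√2)²` and
`(10 - √2)(4 - 2√2) = (6 - 2√2)²`.
-/

lemma Real.sqrt_mul_sqrt_eq_of_mul_eq_sq {x y z : ℝ} (hx : 0 ≤ x) (hz : 0 ≤ z)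
    (h : x * y = z ^ 2) : √x * √y = z := by
  rw [← Real.sqrt_mul hx, h, Real.sqrt_sq hz]

/-- The octic polynomial `q` factors into the product of two quartic polynomials with the
stated real coefficients (√ denoting the nonnegative real square root). -/
theorem octic_factorization (x : ℝ) :
    x^8 + 16*x^7 + 56*x^6 - 96*x^5 - 696*x^4 - 896*x^3 - 96*x^2 + 256*x - 16 =
      (x^4 + 8*x^3 + (-4 + 2*Real.sqrt (116 - 2*Real.sqrt 2))*x^2
        + (-16 + 8*Real.sqrt (10 - Real.sqrt 2))*x
        + (-4*Real.sqrt 2 + 4 - 4*Real.sqrt (4 - 2*Real.sqrt 2))) *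
      (x^4 + 8*x^3 + (-4 - 2*Real.sqrt (116 - 2*Real.sqrt 2))*x^2
        + (-16 - 8*Real.sqrt (10 - Real.sqrt 2))*x
        + (-4*Real.sqrt 2 + 4 + 4*Real.sqrt (4 - 2*Real.sqrt 2))) := by
  set s := √2
  have hs : s ^ 2 = 2 := Real.sq_sqrt zero_le_two
  have hs_le : s ≤ 2 := (Real.sqrt_le_left zero_le_two).2 (by norm_num)
  have ha := Real.sq_sqrt (by linarith : 0 ≤ 116 - 2 * s)
  have hb := Real.sq_sqrt (by linarith : 0 ≤ 10 - s)
  have hc := Real.sq_sqrt (by linarith : 0 ≤ 4 - 2 * s)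
  have hab : √(116 - 2 * s) * √(10 - s) = 34 - 2 * s :=
    Real.sqrt_mul_sqrt_eq_of_mul_eq_sq (by linarith) (by linarith) (by linear_combination -2 * hs)
  have hac : √(116 - 2 * s) * √(4 - 2 * s) = 20 - 6 * s :=
    Real.sqrt_mul_sqrt_eq_of_mul_eq_sq (by linarith) (by linarith) (by linear_combination -32 * hs)
  have hbc : √(10 - s) * √(4 - 2 * s) = 6 - 2 * s :=
    Real.sqrt_mul_sqrt_eq_of_mul_eq_sq (by linarith) (by linarith) (by linear_combination -2 * hs)
  linear_combination 4 * x ^ 4 * ha + 32 * x ^ 3 * hab + 64 * x ^ 2 * hb - 16 * x ^ 2 * hac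
    - 64 * x * hbc + 16 * hc - 16 * hs
end

section
/- Let k ≥ 0, N = 4k + 3, and let α₀, …, α_{2k} be real numbers with c_j = exp(i·α_j). Let L_N be the N×N matrix whose first row and first column consist entirely of ones and whose (N−1)×(N−1) core is the block-circulant matrix circ(B₀, B₁, …, B_{2k}) built from the 2×2 blocks B_j = [[c_j, conj(c_j)],[conj(c_j), c_j]] (so the (r,s) block of the core is B_{(s−r) mod (2k+1)}). Then L_N is a complex Hadamard matrix (i.e. L_N·L_Nᴴ = N·I) if and only if all of the following hold: ∑_{j=0}^{2k} cos α_j = −1/2; ∑_{j=0}^{2k} cos(2α_j) = −1/2; and for every i with 0 ≤ i < k, both ∑_{j=0}^{2k} cos(α_j + α_{(j+1+i) mod (2k+1)}) = −1/2 and ∑_{j=0}^{2k} cos(α_j − α_{(j+1+i) mod (2k+1)}) = −1/2. -/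
open Matrix Complex

/-- The matrix `L_N` of order `N = 4k+3`: first row and column of ones, and
`(N−1)×(N−1)` core equal to the block-circulant matrix built from the 2×2 blocks
`B_j = [[c_j, conj c_j], [conj c_j, c_j]]` with `c_j = exp(i·α_j)`; the `(r,s)` block of
the core is `B_{(s−r) mod (2k+1)}`. -/
noncomputable def Lmat (k : ℕ) (α : ℕ → ℝ) : Matrix (Fin (4*k+3)) (Fin (4*k+3)) ℂ :=
  Matrix.of fun j l =>
    if (j : ℕ) = 0 ∨ (l : ℕ) = 0 then 1
    else
      let m := 2*k+1
      let r := ((j : ℕ) - 1) / 2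
      let s := ((l : ℕ) - 1) / 2
      let z := Complex.exp ((α ((s + m - r) % m) : ℂ) * Complex.I)
      if ((j : ℕ) - 1) % 2 = ((l : ℕ) - 1) % 2 then z else (starRingEnd ℂ) z

/-
All entries of `L` are unimodular, so the diagonal of `L Lᴴ` is `N` and `L` is Hadamard iff the
off-diagonal Gram entries vanish. Index the core by pairs (block `r`, position `p ∈ Fin 2`).
Within a block, the two positions pair each product with its complex conjugate, so the inner
product of the core rows `(r, p)` and `(r', p')` is real and, by circulance, depends only on
`e = r - r'`: it is `1 + 2 ∑ⱼ cos (αⱼ - αⱼ₊ₑ)` if `p = p'` and `1 + 2 ∑ⱼ cos (αⱼ + αⱼ₊ₑ)`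
otherwise, while the border row meets every core row in `1 + 2 ∑ⱼ cos αⱼ`. Both shifted sums
are invariant under `e ↦ -e`, so the shifts `1, …, k` account for every nonzero `e` modulo
`2k + 1`, and the shift `e = 0` of the sum with `+` is `∑ⱼ cos 2αⱼ`.
-/

open Finset ComplexConjugate

theorem mul_conjTranspose_self_apply_self {𝕜 ι : Type*} [RCLike 𝕜] [Fintype ι]
    {H : Matrix ι ι 𝕜} (hH : ∀ i j, ‖H i j‖ = 1) (i : ι) :
    (H * Hᴴ) i i = Fintype.card ι := by
  simp [Matrix.mul_apply, RCLike.mul_conj, hH]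

theorem mul_conjTranspose_self_eq_card_smul_one_iff {𝕜 ι : Type*} [RCLike 𝕜] [Fintype ι]
    [DecidableEq ι] {H : Matrix ι ι 𝕜} (hH : ∀ i j, ‖H i j‖ = 1) :
    H * Hᴴ = (Fintype.card ι : 𝕜) • 1 ↔ Pairwise fun i j => (H * Hᴴ) i j = 0 := by
  refine ⟨fun h i j hij => by simp [h, Matrix.one_apply_ne hij], fun h => ?_⟩
  ext i j
  rcases eq_or_ne i j with rfl | hij
  · simp [mul_conjTranspose_self_apply_self hH]
  · simp [h hij, Matrix.one_apply_ne hij]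

theorem re_exp_mul_I_mul_conj (x y : ℝ) :
    (cexp (x * I) * conj (cexp (y * I))).re = Real.cos (x - y) := by
  rw [← Complex.exp_conj, map_mul, conj_ofReal, conj_I, ← exp_add, ← exp_ofReal_mul_I_re (x - y)]
  congr 2
  push_cast
  ring

theorem re_exp_mul_I_mul (x y : ℝ) :
    (cexp (x * I) * cexp (y * I)).re = Real.cos (x + y) := by
  rw [← exp_add, ← exp_ofReal_mul_I_re (x + y)]
  push_cast
  ring_nf

theorem sum_fin_two_ite_conj (p : Fin 2) (z : ℂ) :
    ∑ q, (if p = q then z else conj z) = (2 * z.re : ℝ) := by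
  rw [← add_conj]
  fin_cases p <;> simp [Fin.sum_univ_two, add_comm]

theorem sum_fin_two_ite_conj_mul_conj (p p' : Fin 2) (z w : ℂ) :
    ∑ q, (if p = q then z else conj z) * conj (if p' = q then w else conj w) =
      (2 * if p = p' then (z * conj w).re else (z * w).re : ℝ) := by
  fin_cases p <;> fin_cases p' <;> apply Complex.ext <;> simp [Fin.sum_univ_two] <;> ring

theorem ofReal_one_add_two_mul_eq_zero_iff (x : ℝ) :
    ((1 + 2 * x : ℝ) : ℂ) = 0 ↔ x = -1 / 2 := by
  rw [ofReal_eq_zero]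
  constructor <;> intro h <;> linarith

section Circulant

open Fin.NatCast

variable {m : ℕ} [NeZero m]

theorem sum_sub_sub_eq_sum_add {M : Type*} [AddCommMonoid M] (f : Fin m → Fin m → M)
    (r r' : Fin m) : ∑ s, f (s - r) (s - r') = ∑ j, f j (j + (r - r')) := by
  rw [← Equiv.sum_comp (Equiv.addRight r)]
  simp only [Equiv.coe_addRight, add_sub_cancel_right, add_sub_assoc]

noncomputable def cosSumAdd (α : ℕ → ℝ) (e : Fin m) : ℝ :=
  ∑ j : Fin m, Real.cos (α j + α ↑(j + e))

noncomputable def cosSumSub (α : ℕ → ℝ) (e : Fin m) : ℝ :=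
  ∑ j : Fin m, Real.cos (α j - α ↑(j + e))

theorem cosSumAdd_neg (α : ℕ → ℝ) (e : Fin m) : cosSumAdd α (-e) = cosSumAdd α e := by
  rw [cosSumAdd, cosSumAdd, ← Equiv.sum_comp (Equiv.addRight e)]
  simp [add_comm]

theorem cosSumSub_neg (α : ℕ → ℝ) (e : Fin m) : cosSumSub α (-e) = cosSumSub α e := by
  rw [cosSumSub, cosSumSub, ← Equiv.sum_comp (Equiv.addRight e)]
  refine sum_congr rfl fun j _ => ?_
  rw [Equiv.coe_addRight, add_neg_cancel_right, ← Real.cos_neg, neg_sub]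

theorem cosSumAdd_zero (α : ℕ → ℝ) :
    cosSumAdd α (0 : Fin m) = ∑ j ∈ range m, Real.cos (2 * α j) := by
  rw [cosSumAdd, ← Fin.sum_univ_eq_sum_range (fun j => Real.cos (2 * α j))]
  simp only [add_zero, two_mul]

theorem val_add_natCast_succ (j : Fin m) (i : ℕ) :
    (↑(j + ((i + 1 : ℕ) : Fin m)) : ℕ) = (j + 1 + i) % m := by
  rw [Fin.val_add, Fin.val_natCast, Nat.add_mod_mod, add_assoc, add_comm 1 i]

theorem cosSumAdd_natCast_succ (α : ℕ → ℝ) (i : ℕ) :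
    cosSumAdd α ((i + 1 : ℕ) : Fin m) = ∑ j ∈ range m, Real.cos (α j + α ((j + 1 + i) % m)) := by
  simp only [cosSumAdd, val_add_natCast_succ]
  exact Fin.sum_univ_eq_sum_range (fun j => Real.cos (α j + α ((j + 1 + i) % m))) m

theorem cosSumSub_natCast_succ (α : ℕ → ℝ) (i : ℕ) :
    cosSumSub α ((i + 1 : ℕ) : Fin m) = ∑ j ∈ range m, Real.cos (α j - α ((j + 1 + i) % m)) := by
  simp only [cosSumSub, val_add_natCast_succ]
  exact Fin.sum_univ_eq_sum_range (fun j => Real.cos (α j - α ((j + 1 + i) % m))) m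

theorem forall_ne_zero_iff_forall_natCast_succ {k : ℕ} {P : Fin (2 * k + 1) → Prop}
    (hP : ∀ e, P (-e) → P e) : (∀ e ≠ 0, P e) ↔ ∀ i < k, P ((i + 1 : ℕ) : Fin (2 * k + 1)) := by
  refine ⟨fun h i hi => h _ ?_, fun h e he => ?_⟩
  · rw [Ne, Fin.ext_iff, Fin.val_natCast, Fin.val_zero, Nat.mod_eq_of_lt (by omega)]
    omega
  · have he' := Fin.val_ne_zero_iff.mpr he
    rcases le_or_gt (e : ℕ) k with hek | hek
    · convert h (e - 1) (by omega)
      rw [Nat.sub_add_cancel (by omega), Fin.cast_val_eq_self]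
    · apply hP
      convert h (2 * k - e) (by omega)
      ext
      rw [Fin.val_neg, if_neg he, Fin.val_natCast, Nat.mod_eq_of_lt (by omega)]
      omega

end Circulant

section Lmat

variable {k : ℕ} {α : ℕ → ℝ}

def blockEquiv (k : ℕ) : Fin (2 * k + 1) × Fin 2 ≃ Fin (4 * k + 2) :=
  finProdFinEquiv.trans (finCongr (by ring))

theorem val_blockEquiv (x : Fin (2 * k + 1) × Fin 2) :
    (blockEquiv k x : ℕ) = x.2 + 2 * x.1 :=
  finProdFinEquiv_apply_val x

theorem sum_univ_eq_add_sum_blockEquiv {M : Type*} [AddCommMonoid M] (f : Fin (4 * k + 3) → M) :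
    ∑ l, f l = f 0 + ∑ s, ∑ q, f (blockEquiv k (s, q)).succ := by
  rw [Fin.sum_univ_succ, ← Equiv.sum_comp (blockEquiv k), Fintype.sum_prod_type]

theorem norm_Lmat_apply (j l : Fin (4 * k + 3)) : ‖Lmat k α j l‖ = 1 := by
  simp only [Lmat, of_apply]
  split_ifs <;> simp [norm_exp_ofReal_mul_I]

theorem Lmat_zero_left (l : Fin (4 * k + 3)) : Lmat k α 0 l = 1 := by
  simp [Lmat]

theorem Lmat_zero_right (j : Fin (4 * k + 3)) : Lmat k α j 0 = 1 := by
  simp [Lmat]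

theorem Lmat_succ_succ (r s : Fin (2 * k + 1)) (p q : Fin 2) :
    Lmat k α (blockEquiv k (r, p)).succ (blockEquiv k (s, q)).succ =
      if p = q then cexp (α ↑(s - r) * I) else conj (cexp (α ↑(s - r) * I)) := by
  have hdiv (r : Fin (2 * k + 1)) (p : Fin 2) : (p + 2 * r : ℕ) / 2 = r := by omega
  have hmod (r : Fin (2 * k + 1)) (p : Fin 2) : (p + 2 * r : ℕ) % 2 = p := by omega
  have hsub : (s + (2 * k + 1) - r : ℕ) % (2 * k + 1) = ↑(s - r) := by
    rw [Fin.val_sub]; congr 1; omega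
  simp [Lmat, val_blockEquiv, hdiv, hmod, hsub, Fin.val_inj]

theorem Lmat_mul_conjTranspose_apply_succ_zero (x : Fin (2 * k + 1) × Fin 2) :
    (Lmat k α * (Lmat k α)ᴴ) (blockEquiv k x).succ 0 =
      ((1 + 2 * ∑ j : Fin (2 * k + 1), Real.cos (α j) : ℝ) : ℂ) := by
  obtain ⟨r, p⟩ := x
  rw [mul_apply, sum_univ_eq_add_sum_blockEquiv]
  simp only [conjTranspose_apply, Lmat_zero_left, Lmat_zero_right, Lmat_succ_succ, star_one,
    mul_one, sum_fin_two_ite_conj, exp_ofReal_mul_I_re]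
  rw [Fintype.sum_equiv (Equiv.subRight r) (fun s => ((2 * Real.cos (α ↑(s - r)) : ℝ) : ℂ))
    (fun j => ((2 * Real.cos (α j) : ℝ) : ℂ)) fun _ => rfl]
  push_cast [mul_sum]
  rfl

theorem Lmat_mul_conjTranspose_apply_succ_succ (r r' : Fin (2 * k + 1)) (p p' : Fin 2) :
    (Lmat k α * (Lmat k α)ᴴ) (blockEquiv k (r, p)).succ (blockEquiv k (r', p')).succ =
      ((1 + 2 * if p = p' then cosSumSub α (r - r') else cosSumAdd α (r - r') : ℝ) : ℂ) := by
  rw [mul_apply, sum_univ_eq_add_sum_blockEquiv]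
  simp only [conjTranspose_apply, Lmat_zero_right, Lmat_succ_succ, star_one, mul_one,
    RCLike.star_def, sum_fin_two_ite_conj_mul_conj, re_exp_mul_I_mul_conj, re_exp_mul_I_mul]
  rw [sum_sub_sub_eq_sum_add (fun x y => ((2 * if p = p' then Real.cos (α x - α y)
    else Real.cos (α x + α y) : ℝ) : ℂ))]
  split_ifs <;> push_cast [cosSumSub, cosSumAdd, mul_sum] <;> rfl

theorem pairwise_Lmat_mul_conjTranspose_eq_zero_iff :
    (Pairwise fun a b => (Lmat k α * (Lmat k α)ᴴ) a b = 0) ↔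
      ∑ j : Fin (2 * k + 1), Real.cos (α j) = -1 / 2 ∧
        (∀ e : Fin (2 * k + 1), cosSumAdd α e = -1 / 2) ∧
        ∀ e : Fin (2 * k + 1), e ≠ 0 → cosSumSub α e = -1 / 2 := by
  simp only [← ofReal_one_add_two_mul_eq_zero_iff,
    ← Lmat_mul_conjTranspose_apply_succ_zero (0, 0)]
  constructor
  · intro h
    refine ⟨h (Fin.succ_ne_zero _), fun e => ?_, fun e he => ?_⟩
    · simpa [Lmat_mul_conjTranspose_apply_succ_succ] using
        @h (blockEquiv k (e, 0)).succ (blockEquiv k (0, 1)).succ (by simp)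
    · simpa [Lmat_mul_conjTranspose_apply_succ_succ] using
        @h (blockEquiv k (e, 0)).succ (blockEquiv k (0, 0)).succ (by simpa using he)
  · rintro ⟨hrow, hadd, hsub⟩ a b hab
    have hcol (x) : (Lmat k α * (Lmat k α)ᴴ) (blockEquiv k x).succ 0 = 0 := by
      rwa [Lmat_mul_conjTranspose_apply_succ_zero] at hrow ⊢
    induction a using Fin.cases with
    | zero => induction b using Fin.cases with
      | zero => exact absurd rfl hab
      | succ t =>
        obtain ⟨x, rfl⟩ := (blockEquiv k).surjective t
        rw [← (isHermitian_mul_conjTranspose_self _).apply, hcol, star_zero]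
    | succ t => induction b using Fin.cases with
      | zero =>
        obtain ⟨x, rfl⟩ := (blockEquiv k).surjective t
        exact hcol x
      | succ t' =>
        obtain ⟨⟨r, p⟩, rfl⟩ := (blockEquiv k).surjective t
        obtain ⟨⟨r', p'⟩, rfl⟩ := (blockEquiv k).surjective t'
        rw [Lmat_mul_conjTranspose_apply_succ_succ]
        split_ifs with hp
        · subst hp
          exact hsub _ (sub_ne_zero.mpr fun hr => hab (by rw [hr]))
        · exact hadd _

end Lmat

/-- `L_N` (with `N = 4k+3`) is a complex Hadamard matrix if and only if the stated
trigonometric unitarity equations hold. -/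
theorem Lmat_isCHM_iff (k : ℕ) (α : ℕ → ℝ) :
    IsCHM (Lmat k α) ↔
      ((∑ j ∈ Finset.range (2*k+1), Real.cos (α j) = -1/2) ∧
       (∑ j ∈ Finset.range (2*k+1), Real.cos (2 * α j) = -1/2) ∧
       (∀ i < k, ∑ j ∈ Finset.range (2*k+1),
          Real.cos (α j + α ((j + 1 + i) % (2*k+1))) = -1/2) ∧
       (∀ i < k, ∑ j ∈ Finset.range (2*k+1),
          Real.cos (α j - α ((j + 1 + i) % (2*k+1))) = -1/2)) := by
  have hH := mul_conjTranspose_self_eq_card_smul_one_iff (norm_Lmat_apply (k := k) (α := α))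
  rw [Fintype.card_fin] at hH
  have hAdd : (∀ e, cosSumAdd α e = -1 / 2) ↔
      cosSumAdd α (0 : Fin (2 * k + 1)) = -1 / 2 ∧ ∀ e ≠ 0, cosSumAdd α e = -1 / 2 :=
    ⟨fun h => ⟨h 0, fun e _ => h e⟩, fun h e => (eq_or_ne e 0).elim (· ▸ h.1) (h.2 e)⟩
  rw [IsCHM, and_iff_right norm_Lmat_apply, hH, pairwise_Lmat_mul_conjTranspose_eq_zero_iff, hAdd,
    forall_ne_zero_iff_forall_natCast_succ fun e h => by rwa [cosSumAdd_neg] at h,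
    forall_ne_zero_iff_forall_natCast_succ fun e h => by rwa [cosSumSub_neg] at h,
    Fin.sum_univ_eq_sum_range (fun j => Real.cos (α j)), cosSumAdd_zero]
  simp only [cosSumAdd_natCast_succ, cosSumSub_natCast_succ, and_assoc]
end
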